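/- Fix a real number t ≥ 0. For n ≥ 1 define m_n = e^{−nt/2} · (1/n) · ∑_{k=0}^{n−1} binom(n, k+1) · (−nt)^k / k!. In the ring ℝ⟦X⟧ of formal power series over ℝ, let S_t = ∑_{n≥1} m_n X^n and let χ_t = e^{t/2} · X · (1+X)^{−1} · exp(tX), where (1+X)^{−1} = ∑_{j≥0} (−1)^j X^j and exp(tX) = ∑_{j≥0} t^j X^j / j!. Then χ_t has zero constant term and substituting χ_t into S_t gives the identity series: S_t(χ_t) = X. In other words, χ_t is the compositional inverse of the moment generating series S_t. -/

import Mathlib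

noncomputable section

/-- The `n`-th moment `m_n = e^{−nt/2} · (1/n) · ∑_{k=0}^{n−1} binom(n,k+1) (−nt)^k / k!`
(with `m_0 = 0`). -/
def momentCoeff (t : ℝ) (n : ℕ) : ℝ :=
  if n = 0 then 0
  else Real.exp (-((n : ℝ) * t) / 2) * (1 / (n : ℝ)) *
    ∑ k ∈ Finset.range n, (n.choose (k + 1) : ℝ) * (-((n : ℝ) * t)) ^ k / (k.factorial : ℝ)

/-- The moment generating series `S_t = ∑_{n≥1} m_n X^n ∈ ℝ⟦X⟧`. -/
def momentSeries (t : ℝ) : PowerSeries ℝ :=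
  PowerSeries.mk (momentCoeff t)

/-- `χ_t = e^{t/2} · X · (1+X)^{−1} · exp(tX) ∈ ℝ⟦X⟧`, with
`(1+X)^{−1} = ∑_j (−1)^j X^j` and `exp(tX) = ∑_j t^j X^j / j!`. -/
def chiSeries (t : ℝ) : PowerSeries ℝ :=
  PowerSeries.C (Real.exp (t / 2)) * PowerSeries.X *
    PowerSeries.mk (fun j => (-1 : ℝ) ^ j) *
    PowerSeries.mk (fun j => t ^ j / (j.factorial : ℝ))

/-!
Put `ψ_t = e^{-t/2} (1 + X) e^{-tX}` and `θ_t = ψ_t⁻¹`, so that `χ_t = X θ_t = X / ψ_t`. Lagrange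
inversion says that the compositional inverse of `X / ψ` has `n`-th coefficient
`(1/n) [X^{n-1}] ψ^n`, and for `ψ = ψ_t` the binomial theorem turns this into `m_n`.

Lagrange inversion is proved without constructing the inverse. With `χ = X θ`, the coefficient
`[X^{c+1}] (X (χ^{r+1})') ψ^{c+1}` is the formal residue of `(r+1) χ^{r-c-1} χ'`, which is
`(c+1) δ_{rc}`. Read as a matrix identity, this exhibits an explicit right inverse of the matrix
`([X^{i}] χ^{r})_{1 ≤ r, i ≤ n}`; a right inverse of a square matrix is also a left inverse, and
the first row of the resulting identity is the claimed one.
-/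

open PowerSeries Finset

namespace PowerSeries

theorem coeff_mul_eq_sum_coeff_mul_coeff_X_pow_mul {R : Type*} [Semiring R] (f g : R⟦X⟧)
    {N n : ℕ} (hN : N ≤ n) :
    coeff N (f * g) = ∑ i ∈ range (n + 1), coeff i f * coeff N (X ^ i * g) := by
  calc coeff N (f * g) = ∑ i ∈ range (N + 1), coeff i f * coeff N (X ^ i * g) := by
        rw [coeff_mul, Nat.sum_antidiagonal_eq_sum_range_succ_mk]
        refine sum_congr rfl fun i hi => ?_
        rw [coeff_X_pow_mul', if_pos (Nat.lt_succ_iff.mp (mem_range.mp hi))]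
    _ = ∑ i ∈ range (n + 1), coeff i f * coeff N (X ^ i * g) := by
        refine sum_subset (range_subset_range.mpr (by omega)) fun i _ hi => ?_
        rw [coeff_X_pow_mul', if_neg (by simpa using hi), mul_zero]

theorem mk_pow_div_factorial_eq_rescale_exp {K : Type*} [Field K] [CharZero K] (a : K) :
    mk (fun j => a ^ j / (j.factorial : K)) = rescale a (exp K) := by
  ext n
  simp [coeff_rescale, coeff_exp, div_eq_mul_inv]

theorem one_add_X_mul_mk_neg_one_pow {R : Type*} [Ring R] :
    (1 + X) * mk (fun j => (-1 : R) ^ j) = 1 := by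
  ext n
  rw [add_mul, one_mul, map_add]
  cases n with
  | zero => simp
  | succ n => simp [coeff_succ_X_mul, pow_succ]

theorem coeff_one_add_X_pow {R : Type*} [Semiring R] (n k : ℕ) :
    coeff k ((1 + X : R⟦X⟧) ^ n) = n.choose k := by
  have h : (1 + X : R⟦X⟧) = ((1 + Polynomial.X : Polynomial R) : R⟦X⟧) := by simp
  rw [h, ← Polynomial.coe_pow, Polynomial.coeff_coe, Polynomial.coeff_one_add_X_pow]

section Derivative

variable {R : Type*} [CommSemiring R]

theorem coeff_X_mul_derivative (f : R⟦X⟧) (n : ℕ) :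
    coeff n (X * d⁄dX R f) = n * coeff n f := by
  cases n with
  | zero => simp
  | succ n => rw [coeff_succ_X_mul, coeff_derivative, mul_comm, Nat.cast_succ]

theorem derivative_pow_succ (f : R⟦X⟧) (k : ℕ) :
    d⁄dX R (f ^ (k + 1)) = C (k + 1 : R) * (f ^ k * d⁄dX R f) := by
  rw [Derivation.leibniz_pow, Nat.add_sub_cancel, nsmul_eq_mul, smul_eq_mul, ← map_natCast C,
    Nat.cast_succ]

theorem X_mul_derivative_X_mul_pow (θ : R⟦X⟧) (r : ℕ) :
    X * d⁄dX R ((X * θ) ^ (r + 1)) =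
      C (r + 1 : R) * X ^ (r + 1) * θ ^ r * (θ + X * d⁄dX R θ) := by
  rw [derivative_pow_succ, Derivation.leibniz, derivative_X, smul_eq_mul, smul_eq_mul]
  ring

theorem mul_derivative_eq_neg_of_mul_eq_one {R : Type*} [CommRing R] {ψ θ : R⟦X⟧}
    (h : ψ * θ = 1) :
    ψ * d⁄dX R θ = -(θ * d⁄dX R ψ) := by
  have h0 : d⁄dX R (ψ * θ) = 0 := by rw [h, derivative_one]
  rw [Derivation.leibniz, smul_eq_mul, smul_eq_mul] at h0
  exact eq_neg_of_add_eq_zero_left h0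

end Derivative

section Lagrange

variable {K : Type*} [Field K] [CharZero K] {ψ θ : K⟦X⟧}

theorem coeff_pow_mul_one_sub_X_mul_derivative (h : ψ * θ = 1) (m : ℕ) :
    coeff m (ψ ^ m * (1 - X * θ * d⁄dX K ψ)) = if m = 0 then 1 else 0 := by
  cases m with
  | zero => simp [coeff_zero_eq_constantCoeff]
  | succ k =>
    have hpow : ψ ^ (k + 1) * θ = ψ ^ k := by rw [pow_succ, mul_assoc, h, mul_one]
    have hscaled : C (k + 1 : K) * (ψ ^ (k + 1) * (1 - X * θ * d⁄dX K ψ)) =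
        C (k + 1 : K) * ψ ^ (k + 1) - X * d⁄dX K (ψ ^ (k + 1)) := by
      rw [derivative_pow_succ]
      linear_combination (-(C (k + 1 : K)) * X * d⁄dX K ψ) * hpow
    have hk : (k + 1 : K) ≠ 0 := Nat.cast_add_one_ne_zero k
    have key := congrArg (coeff (k + 1)) hscaled
    rw [coeff_C_mul, map_sub, coeff_C_mul, coeff_X_mul_derivative, Nat.cast_succ, sub_self,
      mul_eq_zero] at key
    simpa [hk] using key

theorem coeff_X_mul_derivative_X_mul_pow_mul_pow (h : ψ * θ = 1) (r c : ℕ) :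
    coeff (c + 1) (X * d⁄dX K ((X * θ) ^ (r + 1)) * ψ ^ (c + 1)) =
      if r = c then (c + 1 : K) else 0 := by
  rw [X_mul_derivative_X_mul_pow]
  rcases lt_or_ge c r with hcr | hrc
  · rw [if_neg hcr.ne', show ∀ a b c : K⟦X⟧, C (r + 1 : K) * X ^ (r + 1) * a * b * c =
        X ^ (r + 1) * (C (r + 1 : K) * a * b * c) from fun _ _ _ => by ring, coeff_X_pow_mul',
      if_neg (by omega)]
  obtain ⟨m, rfl⟩ := Nat.exists_eq_add_of_le hrc
  have hpow : (ψ * θ) ^ r = 1 := by rw [h, one_pow]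
  have hD := mul_derivative_eq_neg_of_mul_eq_one h
  have hform : C (r + 1 : K) * X ^ (r + 1) * θ ^ r * (θ + X * d⁄dX K θ) * ψ ^ (r + m + 1) =
      C (r + 1 : K) * (X ^ (r + 1) * (ψ ^ m * (1 - X * θ * d⁄dX K ψ))) := by
    linear_combination C (r + 1 : K) * X ^ (r + 1) * (ψ ^ (m + 1) * (θ + X * d⁄dX K θ) * hpow +
      ψ ^ m * h + X * ψ ^ m * hD)
  rw [hform, coeff_C_mul, coeff_X_pow_mul', if_pos (by omega),
    show r + m + 1 - (r + 1) = m by omega, coeff_pow_mul_one_sub_X_mul_derivative h]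
  rcases m with _ | m <;> simp

def powCoeffMatrix (θ : K⟦X⟧) (n : ℕ) : Matrix (Fin n) (Fin n) K :=
  Matrix.of fun r i => coeff ((i : ℕ) + 1) ((X * θ) ^ ((r : ℕ) + 1))

def lagrangeMatrix (ψ : K⟦X⟧) (n : ℕ) : Matrix (Fin n) (Fin n) K :=
  Matrix.of fun i c =>
    ((i : ℕ) + 1 : K) / ((c : ℕ) + 1) * coeff ((c : ℕ) + 1) (X ^ ((i : ℕ) + 1) * ψ ^ ((c : ℕ) + 1))

theorem powCoeffMatrix_mul_lagrangeMatrix (h : ψ * θ = 1) (n : ℕ) :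
    powCoeffMatrix θ n * lagrangeMatrix ψ n = 1 := by
  ext r c
  have hsum := coeff_mul_eq_sum_coeff_mul_coeff_X_pow_mul (X * d⁄dX K ((X * θ) ^ ((r : ℕ) + 1)))
    (ψ ^ ((c : ℕ) + 1)) (Nat.succ_le_of_lt c.isLt)
  rw [coeff_X_mul_derivative_X_mul_pow_mul_pow h, sum_range_succ', coeff_X_mul_derivative,
    Nat.cast_zero, zero_mul, zero_mul, add_zero, ← Fin.sum_univ_eq_sum_range] at hsum
  have hc : ((c : ℕ) + 1 : K) ≠ 0 := Nat.cast_add_one_ne_zero c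
  calc (powCoeffMatrix θ n * lagrangeMatrix ψ n) r c
      = ((c : ℕ) + 1 : K)⁻¹ * ∑ i : Fin n,
          coeff ((i : ℕ) + 1) (X * d⁄dX K ((X * θ) ^ ((r : ℕ) + 1))) *
            coeff ((c : ℕ) + 1) (X ^ ((i : ℕ) + 1) * ψ ^ ((c : ℕ) + 1)) := by
        simp only [Matrix.mul_apply, powCoeffMatrix, lagrangeMatrix, Matrix.of_apply, mul_sum,
          coeff_X_mul_derivative]
        refine sum_congr rfl fun i _ => ?_
        push_cast
        field_simp
    _ = (1 : Matrix (Fin n) (Fin n) K) r c := by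
        rw [← hsum, Matrix.one_apply]
        simp [Fin.val_inj, apply_ite, hc]

theorem lagrange_inversion (h : ψ * θ = 1) (j : ℕ) :
    ∑ i ∈ range j, coeff i (ψ ^ (i + 1)) / (i + 1) * coeff j ((X * θ) ^ (i + 1)) =
      if j = 1 then 1 else 0 := by
  cases j with
  | zero => simp
  | succ n =>
    have hMB : lagrangeMatrix ψ (n + 1) * powCoeffMatrix θ (n + 1) = 1 :=
      mul_eq_one_comm.mp (powCoeffMatrix_mul_lagrangeMatrix h (n + 1))
    have hentry := congrFun₂ hMB 0 (Fin.last n)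
    rw [Matrix.mul_apply, Matrix.one_apply] at hentry
    simp only [lagrangeMatrix, powCoeffMatrix, Matrix.of_apply, Fin.val_zero, Fin.val_last,
      zero_add, pow_one, coeff_succ_X_mul, Nat.cast_zero] at hentry
    rw [← Fin.sum_univ_eq_sum_range]
    convert hentry using 2
    · ring
    · simp [Fin.ext_iff, eq_comm]

end Lagrange

end PowerSeries

open PowerSeries

def psiSeries (t : ℝ) : ℝ⟦X⟧ :=
  C (Real.exp (-t / 2)) * (1 + X) * rescale (-t) (exp ℝ)

def thetaSeries (t : ℝ) : ℝ⟦X⟧ :=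
  C (Real.exp (t / 2)) * PowerSeries.mk (fun j => (-1 : ℝ) ^ j) * rescale t (exp ℝ)

theorem chiSeries_eq_X_mul_thetaSeries (t : ℝ) : chiSeries t = X * thetaSeries t := by
  rw [chiSeries, thetaSeries, mk_pow_div_factorial_eq_rescale_exp]
  ring

theorem psiSeries_mul_thetaSeries (t : ℝ) : psiSeries t * thetaSeries t = 1 := by
  calc psiSeries t * thetaSeries t
      = C (Real.exp (-t / 2) * Real.exp (t / 2)) *
          ((1 + X) * PowerSeries.mk (fun j => (-1 : ℝ) ^ j)) *
          (rescale (-t) (exp ℝ) * rescale t (exp ℝ)) := by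
        rw [psiSeries, thetaSeries, map_mul]
        ring
    _ = 1 := by
        rw [← Real.exp_add, neg_div, neg_add_cancel, Real.exp_zero, exp_mul_exp_eq_exp_add,
          neg_add_cancel, one_add_X_mul_mk_neg_one_pow]
        simp

theorem psiSeries_pow (t : ℝ) (n : ℕ) :
    psiSeries t ^ n = C (Real.exp (-(n * t) / 2)) * (1 + X) ^ n * rescale (-(n * t)) (exp ℝ) := by
  rw [psiSeries, mul_pow, mul_pow, ← map_pow, ← Real.exp_nat_mul, ← map_pow,
    exp_pow_eq_rescale_exp, rescale_rescale]
  ring_nf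

theorem coeff_psiSeries_pow_div (t : ℝ) (n : ℕ) :
    coeff n (psiSeries t ^ (n + 1)) / (n + 1) = momentCoeff t (n + 1) := by
  rw [psiSeries_pow, mul_assoc, coeff_C_mul, mul_comm ((1 + X) ^ _), coeff_mul,
    Nat.sum_antidiagonal_eq_sum_range_succ_mk, momentCoeff, if_neg n.succ_ne_zero]
  simp only [coeff_rescale, coeff_exp, coeff_one_add_X_pow]
  have hterm : ∀ k ∈ range (n + 1),
      (-((n + 1 : ℕ) * t)) ^ k * algebraMap ℚ ℝ (1 / k.factorial) * ((n + 1).choose (n - k) : ℝ) =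
        ((n + 1).choose (k + 1) : ℝ) * (-((n + 1 : ℕ) * t)) ^ k / k.factorial := by
    intro k hk
    rw [Nat.choose_symm_of_eq_add (by simp at hk; omega : n + 1 = n - k + (k + 1))]
    simp only [one_div, map_inv₀, map_natCast]
    ring
  rw [Nat.succ_eq_add_one, sum_congr rfl hterm]
  push_cast
  ring

/-- As `χ_t` has zero constant term, `coeff j (χ_t ^ i) = 0` for `i > j`, so the sum below is the
`j`-th coefficient of the composition `S_t(χ_t)`. -/
theorem chi_comp_inverse_general (t : ℝ) :
    PowerSeries.constantCoeff (chiSeries t) = 0 ∧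
    ∀ j : ℕ,
      (∑ i ∈ Finset.range (j + 1),
          PowerSeries.coeff i (momentSeries t) * PowerSeries.coeff j (chiSeries t ^ i))
        = PowerSeries.coeff j (PowerSeries.X : PowerSeries ℝ) := by
  refine ⟨by simp [chiSeries], fun j => ?_⟩
  rw [sum_range_succ', momentSeries, coeff_mk, momentCoeff, if_pos rfl, zero_mul, add_zero,
    coeff_X]
  simp_rw [coeff_mk, ← coeff_psiSeries_pow_div, chiSeries_eq_X_mul_thetaSeries]
  exact lagrange_inversion (psiSeries_mul_thetaSeries t) j

/-- `χ_t` has zero constant term, and substituting `χ_t` into `S_t` yields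
the identity series `X`: coefficient-wise, for every `j`,
`∑_{i=0}^{j} (coeff_i S_t) · coeff_j (χ_t^i) = coeff_j X` (since `χ_t` has zero constant
term, `coeff_j (χ_t^i) = 0` for `i > j`, so this finite sum is the `j`-th coefficient of the
composition `S_t(χ_t)`).  Thus `χ_t` is the compositional inverse of `S_t`. -/
theorem chi_comp_inverse (t : ℝ) (ht : 0 ≤ t) :
    PowerSeries.constantCoeff (chiSeries t) = 0 ∧
    ∀ j : ℕ,
      (∑ i ∈ Finset.range (j + 1),
          PowerSeries.coeff i (momentSeries t) * PowerSeries.coeff j (chiSeries t ^ i))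
        = PowerSeries.coeff j (PowerSeries.X : PowerSeries ℝ) :=
  chi_comp_inverse_general t
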